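/- For every integer n ≥ 4, 2·(2n − 5) · ∑_T Ear(T) = n·(n − 1) · C_{n−2}, the sum ranging over all triangulations T of P_n; equivalently, the expected number of ears of a uniformly random triangulation of P_n is n(n−1)/(2(2n−5)). -/

import Mathlib

open Finset
open scoped Classical

/-- `IsDiag l r i j` : the pair `{i, j}` (written with `i < j`) is a diagonal of the
convex sub-polygon on vertices `{l, …, r}`. -/
def IsDiag (l r i j : ℕ) : Prop :=
  l ≤ i ∧ i + 2 ≤ j ∧ j ≤ r ∧ ¬(i = l ∧ j = r)

/-- Two diagonals `{a, b}` and `{c, d}` (written with `a < b`, `c < d`) cross. -/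
def Crosses (a b c d : ℕ) : Prop :=
  (a < c ∧ c < b ∧ b < d) ∨ (c < a ∧ a < d ∧ d < b)

/-- All diagonals of the sub-polygon on `{l, …, r}`, as ordered pairs. -/
noncomputable def allDiags (l r : ℕ) : Finset (ℕ × ℕ) :=
  (range (r + 1) ×ˢ range (r + 1)).filter fun p => IsDiag l r p.1 p.2

/-- The triangulations of the sub-polygon on `{l, …, r}` : sets of `r - l - 2`
pairwise noncrossing diagonals. -/
noncomputable def triangulations (l r : ℕ) : Finset (Finset (ℕ × ℕ)) :=
  (allDiags l r).powerset.filter fun T =>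
    T.card = r - l - 2 ∧ ∀ d ∈ T, ∀ e ∈ T, ¬ Crosses d.1 d.2 e.1 e.2

/-- `IsEdge l r i j` : the pair `{i, j}` (with `i < j`) is an edge (boundary side) of the
sub-polygon on `{l, …, r}`. -/
def IsEdge (l r i j : ℕ) : Prop :=
  (l ≤ i ∧ j = i + 1 ∧ j ≤ r) ∨ (i = l ∧ j = r)

/-- `{i, j}` is a side available in the triangulation `T` (an edge of the polygon or a
diagonal of `T`). -/
def IsSide (l r : ℕ) (T : Finset (ℕ × ℕ)) (i j : ℕ) : Prop :=
  IsEdge l r i j ∨ (i, j) ∈ T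

/-- The triangles of a triangulation `T` of the sub-polygon on `{l, …, r}`, as ordered
triples `(a, b, c)` with `a < b < c`, each of whose three sides is an edge or a diagonal
of `T`. -/
noncomputable def triangles (l r : ℕ) (T : Finset (ℕ × ℕ)) : Finset (ℕ × ℕ × ℕ) :=
  (range (r + 1) ×ˢ range (r + 1) ×ˢ range (r + 1)).filter fun t =>
    t.1 < t.2.1 ∧ t.2.1 < t.2.2 ∧
      IsSide l r T t.1 t.2.1 ∧ IsSide l r T t.2.1 t.2.2 ∧ IsSide l r T t.1 t.2.2

/-- The number of sides of the triangle `{a, b, c}` (with `a < b < c`) that are edges of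
the sub-polygon on `{l, …, r}`. -/
noncomputable def edgeCount (l r a b c : ℕ) : ℕ :=
  (if IsEdge l r a b then 1 else 0) + (if IsEdge l r b c then 1 else 0) +
    (if IsEdge l r a c then 1 else 0)

/-- `O(T)` : the number of triangles of `T` with exactly one side an edge of `P_n`. -/
noncomputable def oneSideCount (n : ℕ) (T : Finset (ℕ × ℕ)) : ℕ :=
  ((triangles 1 n T).filter fun t => edgeCount 1 n t.1 t.2.1 t.2.2 = 1).card

/-- `Ear(T)` : the number of triangles of `T` with at least two sides edges of `P_n`. -/
noncomputable def earCount (n : ℕ) (T : Finset (ℕ × ℕ)) : ℕ :=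
  ((triangles 1 n T).filter fun t => 2 ≤ edgeCount 1 n t.1 t.2.1 t.2.2).card

/-- `D(T)` : the number of triangles of `T` containing vertex `1`. -/
noncomputable def degOne (n : ℕ) (T : Finset (ℕ × ℕ)) : ℕ :=
  ((triangles 1 n T).filter fun t => t.1 = 1 ∨ t.2.1 = 1 ∨ t.2.2 = 1).card

/-- `B(T)` : the number of triangles `{l, j, r}` of `T` (with `l < j < r`) such that
`j - l = 1`. -/
noncomputable def blueCount (n : ℕ) (T : Finset (ℕ × ℕ)) : ℕ :=
  ((triangles 1 n T).filter fun t => t.2.1 - t.1 = 1).card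

/-- `A_i(T)` : the number of triangles `{1, a, b}` of `T` containing vertex `1`
(written with `1 < a < b`) such that `b - a = i`. -/
noncomputable def angleCount (n : ℕ) (T : Finset (ℕ × ℕ)) (i : ℕ) : ℕ :=
  ((triangles 1 n T).filter fun t => t.1 = 1 ∧ t.2.2 - t.2.1 = i).card

/-!
An ear is determined by its tip `v`, and it is a triangle of `T` exactly when the diagonal
cutting it off, `{v - 1, v + 1}` taken cyclically, lies in `T`. Contracting the tip identifies the
triangulations of `P_n` containing that diagonal with the triangulations of `P_{n-1}`, so each of
the `n` possible ears occurs in `C_{n-3}` triangulations and `∑_T Ear(T) = n C_{n-3}`; the claim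
is then the Catalan recurrence `(n - 1) C_{n-2} = 2 (2n - 5) C_{n-3}`.

That triangulations are counted by Catalan numbers comes from splitting along the triangle on the
side `{l, r}`. Its existence uses that triangulations are maximal noncrossing sets, which follows
from the bound `r - l - 2` on the size of any noncrossing set, again proved by contracting a vertex.
-/

lemma crosses_comm {a b c d : ℕ} : Crosses a b c d ↔ Crosses c d a b := by
  unfold Crosses; tauto

def IsNoncrossing (l r : ℕ) (S : Finset (ℕ × ℕ)) : Prop :=
  (∀ p ∈ S, IsDiag l r p.1 p.2) ∧ ∀ p ∈ S, ∀ q ∈ S, ¬ Crosses p.1 p.2 q.1 q.2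

lemma mem_triangulations {l r : ℕ} {T : Finset (ℕ × ℕ)} :
    T ∈ triangulations l r ↔ IsNoncrossing l r T ∧ T.card = r - l - 2 := by
  simp only [triangulations, allDiags, IsNoncrossing, mem_filter, mem_powerset,
    Finset.subset_iff, mem_product, mem_range]
  constructor
  · rintro ⟨hsub, hcard, hnc⟩
    exact ⟨⟨fun p hp => (hsub hp).2, hnc⟩, hcard⟩
  · rintro ⟨⟨hdiag, hnc⟩, hcard⟩
    refine ⟨fun p hp => ⟨?_, hdiag p hp⟩, hcard, hnc⟩
    obtain ⟨-, h₁, h₂, -⟩ := hdiag p hp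
    omega

namespace IsNoncrossing

variable {l r : ℕ} {S : Finset (ℕ × ℕ)}

lemma mono {S' : Finset (ℕ × ℕ)} (hS : IsNoncrossing l r S) (h : S' ⊆ S) :
    IsNoncrossing l r S' :=
  ⟨fun p hp => hS.1 p (h hp), fun p hp q hq => hS.2 p (h hp) q (h hq)⟩

lemma insert {a b : ℕ} (hS : IsNoncrossing l r S) (hab : IsDiag l r a b)
    (h : ∀ p ∈ S, ¬ Crosses a b p.1 p.2) : IsNoncrossing l r (insert (a, b) S) := by
  refine ⟨fun p hp => ?_, ?_⟩
  · rcases mem_insert.1 hp with rfl | hp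
    exacts [hab, hS.1 p hp]
  simp only [mem_insert, forall_eq_or_imp]
  refine ⟨⟨by unfold Crosses; omega, h⟩, fun p hp => ⟨?_, hS.2 p hp⟩⟩
  rw [crosses_comm]
  exact h p hp

lemma ne_of_short_diag_mem {v : ℕ} (hS : IsNoncrossing l r S) (hv : (v - 1, v + 1) ∈ S) :
    ∀ p ∈ S.erase (v - 1, v + 1), p.1 ≠ v ∧ p.2 ≠ v := by
  intro p hp
  have hpS := mem_of_mem_erase hp
  have hp_ne : p ≠ (v - 1, v + 1) := Finset.ne_of_mem_erase hp
  have := hS.1 p hpS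
  have := hS.1 _ hv
  have := hS.2 _ hv p hpS
  have := hS.2 p hpS _ hv
  rw [Ne, Prod.ext_iff] at hp_ne
  unfold IsDiag Crosses at *
  dsimp only at *
  omega

end IsNoncrossing

/-- `closeGap v` and `openGap v` are the order-preserving bijections between `ℕ \ {v}` and `ℕ`:
deleting vertex `v` and renumbering, and back. -/
def closeGap (v i : ℕ) : ℕ := if i < v then i else i - 1

def openGap (v i : ℕ) : ℕ := if i < v then i else i + 1

def contract (v : ℕ) (S : Finset (ℕ × ℕ)) : Finset (ℕ × ℕ) :=
  S.image (Prod.map (closeGap v) (closeGap v))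

def expand (v : ℕ) (S : Finset (ℕ × ℕ)) : Finset (ℕ × ℕ) :=
  S.image (Prod.map (openGap v) (openGap v))

section Gap

variable {v : ℕ}

lemma closeGap_openGap (i : ℕ) : closeGap v (openGap v i) = i := by
  unfold closeGap openGap; split_ifs <;> omega

lemma openGap_closeGap {i : ℕ} (hi : i ≠ v) : openGap v (closeGap v i) = i := by
  unfold closeGap openGap; split_ifs <;> omega

lemma openGap_ne (i : ℕ) : openGap v i ≠ v := by
  unfold openGap; split_ifs <;> omega

lemma crosses_openGap {a b c d : ℕ} :
    Crosses (openGap v a) (openGap v b) (openGap v c) (openGap v d) ↔ Crosses a b c d := by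
  unfold Crosses openGap; split_ifs <;> omega

lemma crosses_closeGap {a b c d : ℕ} (ha : a ≠ v) (hb : b ≠ v) (hc : c ≠ v) (hd : d ≠ v) :
    Crosses (closeGap v a) (closeGap v b) (closeGap v c) (closeGap v d) ↔ Crosses a b c d := by
  rw [← crosses_openGap (v := v), openGap_closeGap ha, openGap_closeGap hb,
    openGap_closeGap hc, openGap_closeGap hd]

lemma isDiag_openGap {l r c d : ℕ} (h : IsDiag l (r - 1) c d) :
    IsDiag l r (openGap v c) (openGap v d) := by
  unfold IsDiag openGap at *; split_ifs <;> omega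

lemma isDiag_closeGap {l r c d : ℕ} (hlv : l < v) (hvr : v < r) (h : IsDiag l r c d)
    (hc : c ≠ v) (hd : d ≠ v) (hcd : (c, d) ≠ (v - 1, v + 1)) : IsDiag l (r - 1) (closeGap v c) (closeGap v d) := by
  simp only [Ne, Prod.mk.injEq] at hcd
  unfold IsDiag closeGap at *; split_ifs <;> omega

lemma contract_expand (S : Finset (ℕ × ℕ)) : contract v (expand v S) = S := by
  rw [contract, expand, image_image]
  conv_rhs => rw [← image_id (s := S)]
  exact image_congr fun p _ => Prod.ext (closeGap_openGap _) (closeGap_openGap _)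

lemma map_openGap_map_closeGap {p : ℕ × ℕ} (hp : p.1 ≠ v ∧ p.2 ≠ v) :
    Prod.map (openGap v) (openGap v) (Prod.map (closeGap v) (closeGap v) p) = p :=
  Prod.ext (openGap_closeGap hp.1) (openGap_closeGap hp.2)

lemma expand_contract {S : Finset (ℕ × ℕ)} (hS : ∀ p ∈ S, p.1 ≠ v ∧ p.2 ≠ v) :
    expand v (contract v S) = S := by
  rw [expand, contract, image_image]
  conv_rhs => rw [← image_id (s := S)]
  exact image_congr fun p hp => map_openGap_map_closeGap (hS p hp)

lemma card_contract {S : Finset (ℕ × ℕ)} (hS : ∀ p ∈ S, p.1 ≠ v ∧ p.2 ≠ v) :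
    (contract v S).card = S.card :=
  card_image_of_injOn fun p hp q hq hpq => by
    rw [← map_openGap_map_closeGap (hS p hp), ← map_openGap_map_closeGap (hS q hq)]
    exact congrArg _ hpq

lemma IsNoncrossing.contract {l r : ℕ} {S : Finset (ℕ × ℕ)} (hS : IsNoncrossing l r S)
    (hlv : l < v) (hvr : v < r) (hv : ∀ p ∈ S, p.1 ≠ v ∧ p.2 ≠ v) (hshort : (v - 1, v + 1) ∉ S) :
    IsNoncrossing l (r - 1) (contract v S) := by
  simp only [IsNoncrossing, _root_.contract, forall_mem_image, Prod.map_fst, Prod.map_snd]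
  refine ⟨fun p hp => isDiag_closeGap hlv hvr (hS.1 p hp) (hv p hp).1 (hv p hp).2
    (fun h => hshort (h ▸ hp)), fun p hp q hq => ?_⟩
  rw [crosses_closeGap (hv p hp).1 (hv p hp).2 (hv q hq).1 (hv q hq).2]
  exact hS.2 p hp q hq

end Gap

lemma IsNoncrossing.expand {l r v : ℕ} {S : Finset (ℕ × ℕ)} (hS : IsNoncrossing l (r - 1) S) :
    IsNoncrossing l r (expand v S) := by
  simp only [IsNoncrossing, _root_.expand, forall_mem_image, Prod.map_fst, Prod.map_snd,
    crosses_openGap]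
  exact ⟨fun p hp => isDiag_openGap (hS.1 p hp), hS.2⟩

lemma card_expand (v : ℕ) (S : Finset (ℕ × ℕ)) : (expand v S).card = S.card := by
  have hinj : Function.Injective (openGap v) :=
    Function.LeftInverse.injective (g := closeGap v) closeGap_openGap
  exact card_image_of_injective _ (hinj.prodMap hinj)

lemma ne_of_mem_expand {v : ℕ} {S : Finset (ℕ × ℕ)} :
    ∀ p ∈ expand v S, p.1 ≠ v ∧ p.2 ≠ v := by
  simp only [expand, forall_mem_image, Prod.map_fst, Prod.map_snd]
  exact fun _ _ => ⟨openGap_ne _, openGap_ne _⟩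

lemma short_diag_notMem_expand {l r v : ℕ} {S : Finset (ℕ × ℕ)} (hS : IsNoncrossing l r S) :
    (v - 1, v + 1) ∉ expand v S := by
  simp only [expand, mem_image, Prod.map, Prod.mk.injEq, not_exists, not_and]
  intro p hp h₁ h₂
  have := (hS.1 p hp).2.1
  unfold openGap at h₁ h₂
  split_ifs at h₁ h₂ <;> omega

/-- The vertex `a + 1` under a shortest diagonal `(a, b)` is an endpoint of no diagonal, so it
can be contracted away, losing at most the diagonal `(a, a + 2)`. -/
theorem IsNoncrossing.card_le {l r : ℕ} {S : Finset (ℕ × ℕ)} (hS : IsNoncrossing l r S) :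
    S.card ≤ r - l - 2 := by
  induction r using Nat.strong_induction_on generalizing S with
  | _ r ih =>
  rcases S.eq_empty_or_nonempty with rfl | hne
  · simp
  obtain ⟨⟨a, b⟩, hab, hmin⟩ := S.exists_min_image (fun p => p.2 - p.1) hne
  have hab_diag := hS.1 _ hab
  have hv : ∀ p ∈ S.erase (a, a + 2), p.1 ≠ a + 1 ∧ p.2 ≠ a + 1 := by
    intro p hp
    have hpS := mem_of_mem_erase hp
    have := hS.1 p hpS
    have := hmin p hpS
    have := hS.2 _ hab p hpS
    have := hS.2 p hpS _ hab
    unfold IsDiag Crosses at *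
    dsimp only at *
    omega
  unfold IsDiag at hab_diag
  dsimp only at hab_diag
  have hcontr := ih (r - 1) (by omega)
    ((hS.mono (erase_subset _ _)).contract (v := a + 1) (by omega) (by omega) hv (by simp))
  rw [card_contract hv] at hcontr
  have := pred_card_le_card_erase (s := S) (a := (a, a + 2))
  omega

lemma card_filter_short_diag_mem {l r v : ℕ} (hlv : l < v) (hvr : v < r) (hlr : l + 3 ≤ r) :
    ((triangulations l r).filter ((v - 1, v + 1) ∈ ·)).card =
      (triangulations l (r - 1)).card := by
  have hd : IsDiag l r (v - 1) (v + 1) := by unfold IsDiag; omega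
  refine card_bij' (fun T _ => contract v (T.erase (v - 1, v + 1)))
    (fun S _ => insert (v - 1, v + 1) (expand v S)) (fun T hT => ?_) (fun S hS => ?_)
    (fun T hT => ?_) (fun S hS => ?_)
  · obtain ⟨hT, hmem⟩ := mem_filter.1 hT
    obtain ⟨hS, hcard⟩ := mem_triangulations.1 hT
    have hv := hS.ne_of_short_diag_mem hmem
    refine mem_triangulations.2
      ⟨(hS.mono (erase_subset _ _)).contract hlv hvr hv (notMem_erase _ _), ?_⟩
    rw [card_contract hv, card_erase_of_mem hmem]
    omega
  · obtain ⟨hS, hcard⟩ := mem_triangulations.1 hS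
    have hnot := short_diag_notMem_expand (v := v) hS
    refine mem_filter.2 ⟨mem_triangulations.2 ⟨hS.expand.insert hd fun p hp => ?_, ?_⟩,
      mem_insert_self _ _⟩
    · have := ne_of_mem_expand p hp
      unfold Crosses
      omega
    · rw [card_insert_of_notMem hnot, card_expand]
      omega
  · obtain ⟨hT, hmem⟩ := mem_filter.1 hT
    rw [expand_contract ((mem_triangulations.1 hT).1.ne_of_short_diag_mem hmem),
      insert_erase hmem]
  · rw [erase_insert (short_diag_notMem_expand (mem_triangulations.1 hS).1), contract_expand]

lemma mem_of_forall_not_crosses {l r a b : ℕ} {T : Finset (ℕ × ℕ)} (hT : T ∈ triangulations l r)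
    (hab : IsDiag l r a b) (h : ∀ p ∈ T, ¬ Crosses a b p.1 p.2) : (a, b) ∈ T := by
  obtain ⟨hS, hcard⟩ := mem_triangulations.1 hT
  by_contra hnot
  have := (hS.insert hab h).card_le
  rw [card_insert_of_notMem hnot] at this
  omega

/-- The sides `{l, j}`, `{j, r}` of the triangle `{l, j, r}` that are diagonals, not edges. -/
def apexSides (l j r : ℕ) : Finset (ℕ × ℕ) :=
  ({(l, j), (j, r)} : Finset (ℕ × ℕ)).filter fun p => p.1 + 2 ≤ p.2

lemma apexSides_subset_iff {l j r : ℕ} {T : Finset (ℕ × ℕ)} :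
    apexSides l j r ⊆ T ↔ (l + 2 ≤ j → (l, j) ∈ T) ∧ (j + 2 ≤ r → (j, r) ∈ T) := by
  simp [apexSides, Finset.subset_iff, or_imp, forall_and]

lemma exists_apex {l r : ℕ} {T : Finset (ℕ × ℕ)} (hT : T ∈ triangulations l r) (hlr : l + 2 ≤ r) :
    ∃ j ∈ Ioo l r, apexSides l j r ⊆ T := by
  obtain ⟨hS, -⟩ := mem_triangulations.1 hT
  obtain ⟨j, hjJ, hj_max⟩ := (insert (l + 1) ((T.filter (·.1 = l)).image Prod.snd)).exists_max_image
    id (insert_nonempty _ _)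
  simp only [mem_insert, mem_image, mem_filter, id, forall_eq_or_imp, forall_exists_index,
    and_imp] at hjJ hj_max
  have hj : j = l + 1 ∨ (l, j) ∈ T := by
    obtain h | ⟨⟨a, b⟩, ⟨hab, ha⟩, hb⟩ := hjJ
    · exact Or.inl h
    · dsimp only at ha hb
      rw [← hb, ← ha]
      exact Or.inr hab
  have hlj : l < j ∧ j < r := by
    rcases hj with hj | hj
    · omega
    · obtain ⟨-, h₁, h₂, h₃⟩ := hS.1 _ hj
      dsimp only at h₁ h₂ h₃
      omega
  refine ⟨j, mem_Ioo.2 hlj, apexSides_subset_iff.2 ⟨fun h => hj.resolve_left (by omega),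
    fun h => mem_of_forall_not_crosses hT ⟨by omega, h, le_rfl, by omega⟩ fun p hp hc => ?_⟩⟩
  have hpd := hS.1 p hp
  unfold IsDiag at hpd
  unfold Crosses at hc
  by_cases hpl : p.1 = l
  · have := hj_max.2 p.2 p hp hpl rfl
    omega
  · rcases hj with hj | hj
    · omega
    · exact hS.2 _ hj p hp (by unfold Crosses; omega)

noncomputable def diagsIn (a b : ℕ) (T : Finset (ℕ × ℕ)) : Finset (ℕ × ℕ) :=
  T.filter fun p => IsDiag a b p.1 p.2

lemma IsNoncrossing.diagsIn {l r a b : ℕ} {T : Finset (ℕ × ℕ)} (hS : IsNoncrossing l r T) :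
    IsNoncrossing a b (diagsIn a b T) :=
  ⟨fun _ hp => (mem_filter.1 hp).2,
    fun p hp q hq => hS.2 p (mem_filter.1 hp).1 q (mem_filter.1 hq).1⟩

section Apex

variable {l j r : ℕ} {T T₁ T₂ : Finset (ℕ × ℕ)}

lemma mem_apexSides {p : ℕ × ℕ} :
    p ∈ apexSides l j r ↔ (p = (l, j) ∨ p = (j, r)) ∧ p.1 + 2 ≤ p.2 := by
  simp [apexSides]

lemma card_apexSides (hlj : l < j) (hjr : j < r) :
    (apexSides l j r).card + (j - l - 2) + (r - j - 2) = r - l - 2 := by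
  unfold apexSides
  rw [filter_insert, filter_singleton]
  split_ifs with h₁ h₂ h₂ <;> dsimp only at h₁ h₂
  · rw [card_pair (by rw [Ne, Prod.ext_iff]; omega)]; omega
  all_goals simp only [insert_empty_eq, card_singleton, card_empty]; omega

lemma card_union_apexSides (h₁ : ∀ p ∈ T₁, IsDiag l j p.1 p.2) (h₂ : ∀ p ∈ T₂, IsDiag j r p.1 p.2) :
    (T₁ ∪ T₂ ∪ apexSides l j r).card = T₁.card + T₂.card + (apexSides l j r).card := by
  rw [card_union_of_disjoint, card_union_of_disjoint]
  · refine disjoint_left.2 fun p hp₁ hp₂ => ?_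
    have := h₁ p hp₁
    have := h₂ p hp₂
    unfold IsDiag at *
    omega
  · refine disjoint_left.2 fun p hp hpA => ?_
    rw [mem_apexSides] at hpA
    rcases mem_union.1 hp with hp | hp
    · have := h₁ p hp
      unfold IsDiag at this
      rcases hpA with ⟨rfl | rfl, -⟩ <;> dsimp only at this <;> omega
    · have := h₂ p hp
      unfold IsDiag at this
      rcases hpA with ⟨rfl | rfl, -⟩ <;> dsimp only at this <;> omega

lemma diagsIn_union_diagsIn_union_apexSides (hS : IsNoncrossing l r T)
    (hA : apexSides l j r ⊆ T) : diagsIn l j T ∪ diagsIn j r T ∪ apexSides l j r = T := by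
  refine Subset.antisymm (union_subset (union_subset (filter_subset _ _) (filter_subset _ _)) hA)
    fun p hp => ?_
  obtain ⟨hlj, hjr⟩ := apexSides_subset_iff.1 hA
  have hpd := hS.1 p hp
  have h₁ : l + 2 ≤ j → ¬ Crosses l j p.1 p.2 := fun h => hS.2 _ (hlj h) p hp
  have h₂ : j + 2 ≤ r → ¬ Crosses j r p.1 p.2 := fun h => hS.2 _ (hjr h) p hp
  simp only [diagsIn, mem_union, mem_filter, mem_apexSides, Prod.ext_iff, hp, true_and]
  unfold IsDiag Crosses at *
  omega

lemma diagsIn_left_union_apexSides (h₁ : ∀ p ∈ T₁, IsDiag l j p.1 p.2)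
    (h₂ : ∀ p ∈ T₂, IsDiag j r p.1 p.2) : diagsIn l j (T₁ ∪ T₂ ∪ apexSides l j r) = T₁ := by
  ext p
  simp only [diagsIn, mem_filter, mem_union, mem_apexSides]
  refine ⟨fun ⟨hp, hd⟩ => ?_, fun hp => ⟨Or.inl (Or.inl hp), h₁ p hp⟩⟩
  unfold IsDiag at hd
  rcases hp with (hp | hp) | ⟨rfl | rfl, -⟩
  · exact hp
  · have := h₂ p hp
    unfold IsDiag at this
    omega
  all_goals omega

lemma diagsIn_right_union_apexSides (h₁ : ∀ p ∈ T₁, IsDiag l j p.1 p.2)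
    (h₂ : ∀ p ∈ T₂, IsDiag j r p.1 p.2) : diagsIn j r (T₁ ∪ T₂ ∪ apexSides l j r) = T₂ := by
  ext p
  simp only [diagsIn, mem_filter, mem_union, mem_apexSides]
  refine ⟨fun ⟨hp, hd⟩ => ?_, fun hp => ⟨Or.inl (Or.inr hp), h₂ p hp⟩⟩
  unfold IsDiag at hd
  rcases hp with (hp | hp) | ⟨rfl | rfl, -⟩
  · have := h₁ p hp
    unfold IsDiag at this
    omega
  · exact hp
  all_goals omega

lemma IsNoncrossing.union_apexSides (h₁ : IsNoncrossing l j T₁) (h₂ : IsNoncrossing j r T₂)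
    (hlj : l < j) (hjr : j < r) : IsNoncrossing l r (T₁ ∪ T₂ ∪ apexSides l j r) := by
  have key : ∀ p ∈ T₁ ∪ T₂ ∪ apexSides l j r, (p ∈ T₁ ∧ IsDiag l j p.1 p.2) ∨
      (p ∈ T₂ ∧ IsDiag j r p.1 p.2) ∨ ((p = (l, j) ∨ p = (j, r)) ∧ p.1 + 2 ≤ p.2) := by
    intro p hp
    rw [mem_union, mem_union, mem_apexSides] at hp
    rcases hp with (hp | hp) | hp
    exacts [Or.inl ⟨hp, h₁.1 p hp⟩, Or.inr (Or.inl ⟨hp, h₂.1 p hp⟩), Or.inr (Or.inr hp)]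
  refine ⟨fun p hp => ?_, fun p hp q hq => ?_⟩
  · rcases key p hp with ⟨-, h⟩ | ⟨-, h⟩ | ⟨rfl | rfl, h⟩ <;> unfold IsDiag at * <;>
      (try dsimp only at *) <;> omega
  · rcases key p hp with ⟨hp, hpd⟩ | ⟨hp, hpd⟩ | ⟨rfl | rfl, hpd⟩ <;>
      rcases key q hq with ⟨hq, hqd⟩ | ⟨hq, hqd⟩ | ⟨rfl | rfl, hqd⟩
    all_goals first
      | exact h₁.2 p hp q hq
      | exact h₂.2 p hp q hq
      | (unfold IsDiag Crosses at *; (try dsimp only at *); omega)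

lemma card_filter_apexSides_subset (hlj : l < j) (hjr : j < r) :
    ((triangulations l r).filter (apexSides l j r ⊆ ·)).card =
      (triangulations l j).card * (triangulations j r).card := by
  have hA := card_apexSides hlj hjr
  rw [← card_product]
  refine card_bij' (fun T _ => (diagsIn l j T, diagsIn j r T))
    (fun P _ => P.1 ∪ P.2 ∪ apexSides l j r) (fun T hT => ?_) (fun P hP => ?_)
    (fun T hT => ?_) (fun P hP => ?_)
  · obtain ⟨hT, hTA⟩ := mem_filter.1 hT
    obtain ⟨hS, hcard⟩ := mem_triangulations.1 hT
    have hunion := card_union_apexSides (hS.diagsIn (a := l) (b := j)).1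
      (hS.diagsIn (a := j) (b := r)).1
    rw [diagsIn_union_diagsIn_union_apexSides hS hTA] at hunion
    have h₁ := (hS.diagsIn (a := l) (b := j)).card_le
    have h₂ := (hS.diagsIn (a := j) (b := r)).card_le
    simp only [mem_product, mem_triangulations]
    exact ⟨⟨hS.diagsIn, by omega⟩, ⟨hS.diagsIn, by omega⟩⟩
  · obtain ⟨h₁, h₂⟩ := mem_product.1 hP
    obtain ⟨hS₁, hc₁⟩ := mem_triangulations.1 h₁
    obtain ⟨hS₂, hc₂⟩ := mem_triangulations.1 h₂
    refine mem_filter.2 ⟨mem_triangulations.2 ⟨hS₁.union_apexSides hS₂ hlj hjr, ?_⟩,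
      subset_union_right⟩
    rw [card_union_apexSides hS₁.1 hS₂.1]
    omega
  · obtain ⟨hT, hTA⟩ := mem_filter.1 hT
    exact diagsIn_union_diagsIn_union_apexSides (mem_triangulations.1 hT).1 hTA
  · obtain ⟨h₁, h₂⟩ := mem_product.1 hP
    exact Prod.ext (diagsIn_left_union_apexSides (mem_triangulations.1 h₁).1.1
      (mem_triangulations.1 h₂).1.1) (diagsIn_right_union_apexSides
      (mem_triangulations.1 h₁).1.1 (mem_triangulations.1 h₂).1.1)

end Apex

lemma IsNoncrossing.apex_unique {l r j j' : ℕ} {T : Finset (ℕ × ℕ)} (hS : IsNoncrossing l r T)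
    (hj : j ∈ Ioo l r) (hj' : j' ∈ Ioo l r) (hA : apexSides l j r ⊆ T)
    (hA' : apexSides l j' r ⊆ T) : j = j' := by
  have key : ∀ {a b : ℕ}, a ∈ Ioo l r → b ∈ Ioo l r → a < b → apexSides l a r ⊆ T →
      apexSides l b r ⊆ T → False := by
    intro a b ha hb hab hA hB
    rw [mem_Ioo] at ha hb
    exact hS.2 _ ((apexSides_subset_iff.1 hB).1 (by omega)) _
      ((apexSides_subset_iff.1 hA).2 (by omega)) (by unfold Crosses; omega)
  by_contra hne
  rcases Nat.lt_or_gt_of_ne hne with h | h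
  exacts [key hj hj' h hA hA', key hj' hj h hA' hA]

lemma triangulations_self_add_one (l : ℕ) : triangulations l (l + 1) = {∅} := by
  ext T
  simp only [mem_triangulations, mem_singleton]
  refine ⟨fun h => card_eq_zero.1 (by omega), ?_⟩
  rintro rfl
  simp [IsNoncrossing]

lemma sum_catalan_mul_catalan_Ioo (l k : ℕ) :
    ∑ j ∈ Ioo l (l + k + 2), catalan (j - l - 1) * catalan (l + k + 2 - j - 1) =
      catalan (k + 1) := by
  rw [← Finset.Ico_add_one_left_eq_Ioo, sum_Ico_eq_sum_range, catalan_succ',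
    Nat.sum_antidiagonal_eq_sum_range_succ_mk]
  refine sum_congr (by congr 1; omega) fun i hi => ?_
  rw [mem_range] at hi
  congr 2 <;> omega

theorem card_triangulations {l r : ℕ} (hlr : l < r) :
    (triangulations l r).card = catalan (r - l - 1) := by
  induction hk : r - l - 1 using Nat.strong_induction_on generalizing l r with
  | _ k ih =>
  rcases k with _ | k
  · simp [show r = l + 1 by omega, triangulations_self_add_one]
  obtain rfl : r = l + k + 2 := by omega
  have hcover : triangulations l (l + k + 2) = (Ioo l (l + k + 2)).biUnion
      fun j => (triangulations l (l + k + 2)).filter (apexSides l j (l + k + 2) ⊆ ·) := by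
    ext T
    simp only [mem_biUnion, mem_filter]
    refine ⟨fun hT => ?_, fun ⟨_, _, hT, _⟩ => hT⟩
    obtain ⟨j, hj, hA⟩ := exists_apex hT (by omega)
    exact ⟨j, hj, hT, hA⟩
  have hdisj : (Ioo l (l + k + 2) : Set ℕ).PairwiseDisjoint
      fun j => (triangulations l (l + k + 2)).filter (apexSides l j (l + k + 2) ⊆ ·) := by
    intro j hj j' hj' hne
    refine disjoint_left.2 fun T hT hT' => hne ?_
    obtain ⟨hT, hA⟩ := mem_filter.1 hT
    exact (mem_triangulations.1 hT).1.apex_unique hj hj' hA (mem_filter.1 hT').2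
  rw [hcover, card_biUnion hdisj, ← sum_catalan_mul_catalan_Ioo]
  refine sum_congr rfl fun j hj => ?_
  rw [mem_Ioo] at hj
  rw [card_filter_apexSides_subset hj.1 hj.2, ih _ (by omega) hj.1 rfl, ih _ (by omega) hj.2 rfl]

lemma mem_triangles_iff {l r a b c : ℕ} {T : Finset (ℕ × ℕ)} :
    (a, b, c) ∈ triangles l r T ↔ a < b ∧ b < c ∧ c ≤ r ∧
      IsSide l r T a b ∧ IsSide l r T b c ∧ IsSide l r T a c := by
  simp only [triangles, mem_filter, mem_product, mem_range]
  constructor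
  · rintro ⟨⟨-, -, h⟩, hab, hbc, hs⟩
    exact ⟨hab, hbc, by omega, hs⟩
  · rintro ⟨hab, hbc, hc, hs⟩
    exact ⟨⟨by omega, by omega, by omega⟩, hab, hbc, hs⟩

/-- The ear of `P_n` with tip `v` (neighbours taken cyclically), and its side that is a diagonal. -/
def earTriangle (n v : ℕ) : ℕ × ℕ × ℕ :=
  if v = 1 then (1, 2, n) else if v = n then (1, n - 1, n) else (v - 1, v, v + 1)

def earDiagonal (n v : ℕ) : ℕ × ℕ :=
  if v = 1 then (2, n) else if v = n then (1, n - 1) else (v - 1, v + 1)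

section Ears

variable {n : ℕ}

lemma two_le_edgeCount_iff {a b c : ℕ} (hn : 4 ≤ n) (hab : a < b) (hbc : b < c) :
    2 ≤ edgeCount 1 n a b c ↔ ∃ v ∈ Icc 1 n, earTriangle n v = (a, b, c) := by
  unfold edgeCount IsEdge earTriangle
  constructor
  · intro h
    refine ⟨if a = 1 ∧ c = n then (if b = 2 then 1 else n) else b, ?_⟩
    split_ifs at h ⊢ <;> simp only [mem_Icc, Prod.mk.injEq, true_and] <;> omega
  · rintro ⟨v, hv, he⟩
    rw [mem_Icc] at hv
    split_ifs at he ⊢ <;> simp only [Prod.mk.injEq] at he <;> omega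

lemma earTriangle_mem_triangles_iff {v : ℕ} {T : Finset (ℕ × ℕ)} (hn : 4 ≤ n)
    (hv : v ∈ Icc 1 n) : earTriangle n v ∈ triangles 1 n T ↔ earDiagonal n v ∈ T := by
  rw [mem_Icc] at hv
  unfold earTriangle earDiagonal
  split_ifs with h₁ h₂
  all_goals simp only [mem_triangles_iff, IsSide, IsEdge]
  all_goals grind

lemma earTriangle_injOn (hn : 4 ≤ n) : Set.InjOn (earTriangle n) (Icc 1 n) := by
  intro v hv w hw h
  simp only [coe_Icc, Set.mem_Icc] at hv hw
  unfold earTriangle at h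
  split_ifs at h <;> simp only [Prod.mk.injEq] at h <;> omega

lemma earCount_eq_card_filter (hn : 4 ≤ n) (T : Finset (ℕ × ℕ)) :
    earCount n T = ((Icc 1 n).filter (earDiagonal n · ∈ T)).card := by
  rw [earCount,
    ← card_image_of_injOn ((earTriangle_injOn hn).mono (coe_subset.2 (filter_subset _ _)))]
  congr 1
  ext ⟨a, b, c⟩
  simp only [mem_filter, mem_image]
  constructor
  · rintro ⟨ht, h2⟩
    obtain ⟨hab, hbc, -⟩ := mem_triangles_iff.1 ht
    obtain ⟨v, hv, he⟩ := (two_le_edgeCount_iff hn hab hbc).1 h2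
    rw [← he] at ht
    exact ⟨v, ⟨hv, (earTriangle_mem_triangles_iff hn hv).1 ht⟩, he⟩
  · rintro ⟨v, ⟨hv, hd⟩, he⟩
    have ht := (earTriangle_mem_triangles_iff hn hv).2 hd
    rw [he] at ht
    obtain ⟨hab, hbc, -⟩ := mem_triangles_iff.1 ht
    exact ⟨ht, (two_le_edgeCount_iff hn hab hbc).2 ⟨v, hv, he⟩⟩

lemma card_filter_earDiagonal_mem (hn : 4 ≤ n) {v : ℕ} (hv : v ∈ Icc 1 n) :
    ((triangulations 1 n).filter (earDiagonal n v ∈ ·)).card = catalan (n - 3) := by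
  rw [mem_Icc] at hv
  unfold earDiagonal
  split_ifs with h₁ h₂
  · rw [filter_congr (q := (apexSides 1 2 n ⊆ ·)) fun T _ => by simp [apexSides_subset_iff, hn],
      card_filter_apexSides_subset (by omega) (by omega), card_triangulations (by omega),
      card_triangulations (by omega)]
    rw [show n - 2 - 1 = n - 3 by omega]
    simp
  · rw [filter_congr (q := (apexSides 1 (n - 1) n ⊆ ·)) fun T _ => by
        simp [apexSides_subset_iff, show 3 ≤ n - 1 by omega, show ¬ n - 1 + 2 ≤ n by omega],
      card_filter_apexSides_subset (by omega) (by omega), card_triangulations (by omega),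
      card_triangulations (by omega)]
    rw [show n - (n - 1) - 1 = 0 by omega, show n - 1 - 1 - 1 = n - 3 by omega]
    simp
  · rw [card_filter_short_diag_mem (by omega) (by omega) (by omega), card_triangulations (by omega),
      show n - 1 - 1 - 1 = n - 3 by omega]

end Ears

lemma sum_earCount {n : ℕ} (hn : 4 ≤ n) :
    ∑ T ∈ triangulations 1 n, earCount n T = n * catalan (n - 3) := by
  let R : Finset (ℕ × ℕ) → ℕ → Prop := fun T v => earDiagonal n v ∈ T
  calc ∑ T ∈ triangulations 1 n, earCount n T
      = ∑ T ∈ triangulations 1 n, ((Icc 1 n).bipartiteAbove R T).card :=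
        sum_congr rfl fun T _ => earCount_eq_card_filter hn T
    _ = ∑ v ∈ Icc 1 n, ((triangulations 1 n).bipartiteBelow R v).card :=
        sum_card_bipartiteAbove_eq_sum_card_bipartiteBelow _
    _ = ∑ v ∈ Icc 1 n, catalan (n - 3) :=
        sum_congr rfl fun v hv => card_filter_earDiagonal_mem hn hv
    _ = n * catalan (n - 3) := by simp

lemma two_mul_two_mul_add_one_mul_catalan (n : ℕ) :
    2 * (2 * n + 1) * catalan n = (n + 2) * catalan (n + 1) := by
  have h := Nat.succ_mul_centralBinom_succ n
  rw [← succ_mul_catalan_eq_centralBinom, ← succ_mul_catalan_eq_centralBinom] at h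
  apply Nat.eq_of_mul_eq_mul_left n.succ_pos
  linarith

/-- the expected number of ears is `n(n-1)/(2(2n-5))` (Lemma 4(II)). -/
theorem ear_expectation (n : ℕ) (hn : 4 ≤ n) :
    2 * (2 * n - 5) * ∑ T ∈ triangulations 1 n, earCount n T =
      n * (n - 1) * catalan (n - 2) := by
  rw [sum_earCount hn]
  obtain ⟨m, rfl⟩ : ∃ m, n = m + 4 := ⟨n - 4, by omega⟩
  rw [show 2 * (m + 4) - 5 = 2 * (m + 1) + 1 by omega, show m + 4 - 3 = m + 1 by omega,
    show m + 4 - 2 = m + 1 + 1 by omega, show m + 4 - 1 = m + 1 + 2 by omega]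
  calc 2 * (2 * (m + 1) + 1) * ((m + 4) * catalan (m + 1))
      = (m + 4) * (2 * (2 * (m + 1) + 1) * catalan (m + 1)) := by ring
    _ = (m + 4) * (m + 1 + 2) * catalan (m + 1 + 1) := by
        rw [two_mul_two_mul_add_one_mul_catalan]; ring
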